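/- arXiv:2306.17697 — 2 statements merged into one kernel-verified Lean document; each statement's English description precedes it below -/
import Mathlib

section
/- Joint high-SNR and high-OSR limit: fix γ ∈ [0,1) and assume the interference power Σ_{j≠u} |gᴴh_j|² > 0. Then as (β, ρ) tends to (∞, ∞) (i.e., along the product filter atTop × atTop), ζ(γ, β, ρ) tends to the interference-limited upper bound |gᴴh_u|² / Σ_{j≠u} |gᴴh_j|², which is exactly the high-SNR limit of the unquantized SINDR: the low-resolution system achieves the same limiting performance as the unquantized one when both the SNR and the OSR are sufficiently high. -/
open Finset Filter Topology

/-- Inner product `gᴴ x = Σ_m conj(g_m) x_m`. -/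
noncomputable def gH {M : ℕ} (g x : Fin M → ℂ) : ℂ :=
  ∑ m, (starRingEnd ℂ) (g m) * x m

/-- Quadratic form `gᴴ H_e g = Σ_m (H_e)_{mm} |g_m|²` for a diagonal `H_e`. -/
noncomputable def quadHe {M : ℕ} (He : Fin M → ℝ) (g : Fin M → ℂ) : ℝ :=
  ∑ m, He m * ‖g m‖ ^ 2

/-- Squared Euclidean norm `‖g‖² = Σ_m |g_m|²`. -/
noncomputable def normSq' {M : ℕ} (g : Fin M → ℂ) : ℝ :=
  ∑ m, ‖g m‖ ^ 2

/-- Interference power `Σ_{j ≠ u} |gᴴ h_j|²`. -/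
noncomputable def interf {M U : ℕ} (u : Fin U) (g : Fin M → ℂ)
    (h : Fin U → Fin M → ℂ) : ℝ :=
  ∑ j ∈ Finset.univ.erase u, ‖gH g (h j)‖ ^ 2

/-- SINDR of user `u`:
`ζ(γ,β,ρ) = |gᴴh_u|² / ( Σ_{j≠u}|gᴴh_j|² + (γ/((1−γ)β)) gᴴH_e g + (1/(ρ(1−γ)))‖g‖² )`. -/
noncomputable def zeta {M U : ℕ} (u : Fin U) (g : Fin M → ℂ)
    (h : Fin U → Fin M → ℂ) (He : Fin M → ℝ) (γ β ρ : ℝ) : ℝ :=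
  ‖gH g (h u)‖ ^ 2 /
    (interf u g h + (γ / ((1 - γ) * β)) * quadHe He g
      + (1 / (ρ * (1 - γ))) * normSq' g)

theorem tendsto_const_div_mul_atTop_mul_const {k : ℝ} (hk : 0 < k) (a c : ℝ) :
    Tendsto (fun x : ℝ => a / (k * x) * c) atTop (𝓝 0) := by
  simpa using ((tendsto_id.const_mul_atTop hk).const_div_atTop a).mul_const c

theorem Filter.Tendsto.const_add_fst_add_snd {α β M : Type*} [AddMonoid M] [TopologicalSpace M]
    [ContinuousAdd M] {l₁ : Filter α} {l₂ : Filter β} {f : α → M} {g : β → M}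
    (hf : Tendsto f l₁ (𝓝 0)) (hg : Tendsto g l₂ (𝓝 0)) (a : M) :
    Tendsto (fun q : α × β => a + f q.1 + g q.2) (l₁ ×ˢ l₂) (𝓝 a) := by
  simpa using (tendsto_const_nhds.add (hf.comp tendsto_fst)).add (hg.comp tendsto_snd)

theorem sindr_tendsto_joint_infinity_general (M U : ℕ) (u : Fin U) (g : Fin M → ℂ)
    (h : Fin U → Fin M → ℂ) (He : Fin M → ℝ)
    (γ : ℝ) (hγ : γ ∈ Set.Ico (0 : ℝ) 1) (hI : 0 < interf u g h) :
    Tendsto (fun q : ℝ × ℝ => zeta u g h He γ q.1 q.2) (atTop ×ˢ atTop)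
      (𝓝 (‖gH g (h u)‖ ^ 2 / interf u g h)) := by
  have h1γ : 0 < 1 - γ := sub_pos.2 hγ.2
  have hOSR := tendsto_const_div_mul_atTop_mul_const h1γ γ (quadHe He g)
  have hSNR : Tendsto (fun ρ : ℝ => 1 / (ρ * (1 - γ)) * normSq' g) atTop (𝓝 0) := by
    simpa only [mul_comm _ (1 - γ)] using
      tendsto_const_div_mul_atTop_mul_const h1γ 1 (normSq' g)
  exact tendsto_const_nhds.div (hOSR.const_add_fst_add_snd hSNR (interf u g h)) hI.ne'

/-- Joint high-SNR and high-OSR limit: ζ(γ,β,ρ) tends to the interference-limited bound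
as (β,ρ) → (∞,∞) along the product filter. -/
theorem sindr_tendsto_joint_infinity (M U : ℕ) (u : Fin U) (g : Fin M → ℂ)
    (h : Fin U → Fin M → ℂ) (He : Fin M → ℝ) (hHe : ∀ m, 0 ≤ He m)
    (γ : ℝ) (hγ : γ ∈ Set.Ico (0 : ℝ) 1) (hI : 0 < interf u g h) :
    Tendsto (fun q : ℝ × ℝ => zeta u g h He γ q.1 q.2) (atTop ×ˢ atTop)
      (𝓝 (‖gH g (h u)‖ ^ 2 / interf u g h)) :=
  sindr_tendsto_joint_infinity_general M U u g h He γ hγ hI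
end

section
/- Joint high-SNR and high-OSR limit of the achievable sum rate: fix γ ∈ [0,1) and Δf > 0, and assume Σ_{j≠u} |g_{u,k}ᴴh_{j,k}|² > 0 for all (u,k). Then as (β, ρ) tends to (∞, ∞) (along the product filter atTop × atTop), the sum rate R(γ, β, ρ) tends to Σ_{k=1}^{K} Σ_{u=1}^{U} Δf · log₂( 1 + |g_{u,k}ᴴh_{u,k}|² / Σ_{j≠u} |g_{u,k}ᴴh_{j,k}|² ), the interference-limited sum rate of the unquantized system. -/
open Finset Filter Topology

/-- Achievable sum rate `R(γ,β,ρ) = Σ_k Σ_u Δf · log₂(1 + ζ_{u,k}(γ,β,ρ))`. -/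
noncomputable def sumRate {M U K : ℕ} (g : Fin K → Fin U → Fin M → ℂ)
    (h : Fin K → Fin U → Fin M → ℂ) (He : Fin M → ℝ) (Δf : ℝ)
    (γ β ρ : ℝ) : ℝ :=
  ∑ k : Fin K, ∑ u : Fin U, Δf * Real.logb 2 (1 + zeta u (g k u) (h k) He γ β ρ)

/-!
Both distortion terms in the SINDR denominator are constants divided by `β` resp. `ρ`, so they
vanish as `(β, ρ) → (∞, ∞)` and the denominator tends to the interference power. Since that power
is positive, the SINDR and then each `log₂(1 + ζ)` converge by continuity, and so does the finite
sum over users and subcarriers.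
-/

lemma tendsto_const_div_mul_atTop_nhds_zero (c d : ℝ) :
    Tendsto (fun x : ℝ => c / (d * x)) atTop (𝓝 0) := by
  simp_rw [div_mul_eq_div_div]
  exact tendsto_const_nhds.div_atTop tendsto_id

lemma tendsto_zeta_atTop_atTop {M U : ℕ} (u : Fin U) (g : Fin M → ℂ)
    (h : Fin U → Fin M → ℂ) (He : Fin M → ℝ) (γ : ℝ) (hI : interf u g h ≠ 0) :
    Tendsto (fun q : ℝ × ℝ => zeta u g h He γ q.1 q.2) (atTop ×ˢ atTop)
      (𝓝 (‖gH g (h u)‖ ^ 2 / interf u g h)) := by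
  have hquant : Tendsto (fun q : ℝ × ℝ => γ / ((1 - γ) * q.1)) (atTop ×ˢ atTop) (𝓝 0) :=
    (tendsto_const_div_mul_atTop_nhds_zero γ (1 - γ)).comp tendsto_fst
  have hnoise : Tendsto (fun q : ℝ × ℝ => 1 / (q.2 * (1 - γ))) (atTop ×ˢ atTop) (𝓝 0) := by
    simp_rw [mul_comm _ (1 - γ)]
    exact (tendsto_const_div_mul_atTop_nhds_zero 1 (1 - γ)).comp tendsto_snd
  have hdenom := ((tendsto_const_nhds (x := interf u g h)).add
    (hquant.mul_const (quadHe He g))).add (hnoise.mul_const (normSq' g))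
  simp only [zero_mul, add_zero] at hdenom
  exact tendsto_const_nhds.div hdenom hI

theorem sumRate_tendsto_joint_infinity_general (M U K : ℕ) (g : Fin K → Fin U → Fin M → ℂ)
    (h : Fin K → Fin U → Fin M → ℂ) (He : Fin M → ℝ)
    (Δf : ℝ) (γ : ℝ)
    (hI : ∀ (k : Fin K) (u : Fin U), 0 < interf u (g k u) (h k)) :
    Tendsto (fun q : ℝ × ℝ => sumRate g h He Δf γ q.1 q.2) (atTop ×ˢ atTop)
      (𝓝 (∑ k : Fin K, ∑ u : Fin U, Δf *
        Real.logb 2 (1 + ‖gH (g k u) (h k u)‖ ^ 2 / interf u (g k u) (h k)))) := by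
  refine tendsto_finsetSum _ fun k _ => tendsto_finsetSum _ fun u _ => ?_
  have hpos : 0 < 1 + ‖gH (g k u) (h k u)‖ ^ 2 / interf u (g k u) (h k) := by
    have := hI k u
    positivity
  exact ((Real.continuousAt_logb hpos.ne').tendsto.comp (tendsto_const_nhds.add
    (tendsto_zeta_atTop_atTop u (g k u) (h k) He γ (hI k u).ne'))).const_mul Δf

/-- Joint high-SNR and high-OSR limit of the achievable sum rate: as (β,ρ) → (∞,∞),
R(γ,β,ρ) tends to the interference-limited sum rate of the unquantized system. -/
theorem sumRate_tendsto_joint_infinity (M U K : ℕ) (g : Fin K → Fin U → Fin M → ℂ)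
    (h : Fin K → Fin U → Fin M → ℂ) (He : Fin M → ℝ) (hHe : ∀ m, 0 ≤ He m)
    (Δf : ℝ) (hΔf : 0 < Δf) (γ : ℝ) (hγ : γ ∈ Set.Ico (0 : ℝ) 1)
    (hI : ∀ (k : Fin K) (u : Fin U), 0 < interf u (g k u) (h k)) :
    Tendsto (fun q : ℝ × ℝ => sumRate g h He Δf γ q.1 q.2) (atTop ×ˢ atTop)
      (𝓝 (∑ k : Fin K, ∑ u : Fin U, Δf *
        Real.logb 2 (1 + ‖gH (g k u) (h k u)‖ ^ 2 / interf u (g k u) (h k)))) :=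
  sumRate_tendsto_joint_infinity_general M U K g h He Δf γ hI
end
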